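/- arXiv:1111.4157 — 4 statements merged into one kernel-verified Lean document; each statement's English description precedes it below -/
import Mathlib

section
/- For every natural number n ≥ 1, the characteristic polynomial of the n×n real matrix A_n (zero diagonal, subdiagonal entries equal to 1, superdiagonal entries (A_n)_{i,i+1} = i+1) equals the n-th probabilist's Hermite polynomial H_n; equivalently, det(A_n − λI) = H_n(−λ) for all real λ. -/
/-!
Expanding `det (X - A_{n+2})` along its last row gives the three-term recurrence
`D_{n+2} = X D_{n+1} - (n + 1) D_n`, which the Hermite polynomials also satisfy because
`H_{n+1}' = (n + 1) H_n`. The evaluated form then follows from the parity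
`H_n (-x) = (-1)^n H_n (x)`.
-/

open Polynomial Matrix

/-- The `n × n` tridiagonal matrix `A_n` with zero diagonal, subdiagonal entries `1`,
and superdiagonal entries `(A_n)_{i,i+1} = i + 1`. -/
noncomputable def hermMatrix (n : ℕ) : Matrix (Fin n) (Fin n) ℝ :=
  Matrix.of fun i j =>
    if (j : ℕ) = (i : ℕ) + 1 then ((i : ℕ) + 1 : ℝ)
    else if (i : ℕ) = (j : ℕ) + 1 then 1
    else 0

namespace Matrix

variable {R : Type*} [CommRing R]

def tridiagonal (d u l : ℕ → R) (n : ℕ) : Matrix (Fin n) (Fin n) R :=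
  of fun i j =>
    if (j : ℕ) = i then d i
    else if (j : ℕ) = i + 1 then u i
    else if (i : ℕ) = j + 1 then l j
    else 0

theorem det_succ_of_forall_castSucc_last_eq_zero {n : ℕ}
    (M : Matrix (Fin (n + 1)) (Fin (n + 1)) R) (h : ∀ i : Fin n, M i.castSucc (Fin.last n) = 0) :
    M.det = M (Fin.last n) (Fin.last n) * (M.submatrix Fin.castSucc Fin.castSucc).det := by
  rw [det_succ_column M (Fin.last n), Fin.sum_univ_castSucc]
  simp [h, Fin.succAbove_last, Even.neg_one_pow ⟨n, rfl⟩]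

theorem tridiagonal_submatrix_castSucc (d u l : ℕ → R) (n : ℕ) :
    (tridiagonal d u l (n + 1)).submatrix Fin.castSucc Fin.castSucc = tridiagonal d u l n := by
  ext i j
  simp [tridiagonal]

theorem det_tridiagonal_succ_succ (d u l : ℕ → R) (n : ℕ) :
    (tridiagonal d u l (n + 2)).det =
      d (n + 1) * (tridiagonal d u l (n + 1)).det - u n * l n * (tridiagonal d u l n).det := by
  set M := tridiagonal d u l (n + 2)
  have hminor : (M.submatrix Fin.castSucc (Fin.last n).castSucc.succAbove).det =
      u n * (tridiagonal d u l n).det := by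
    rw [det_succ_of_forall_castSucc_last_eq_zero]
    · congr 1
      · simp [M, tridiagonal]
      · congr 1
        ext i j
        simp [M, tridiagonal, Fin.succAbove_castSucc_of_lt _ _ j.castSucc_lt_last]
    · intro i
      simp [M, tridiagonal]
      split_ifs <;> first | rfl | omega
  have hrow (j : Fin n) : M (Fin.last (n + 1)) j.castSucc.castSucc = 0 := by
    simp [M, tridiagonal]
    split_ifs <;> first | rfl | omega
  have hdiag : M (Fin.last (n + 1)) (Fin.last (n + 1)) = d (n + 1) := by simp [M, tridiagonal]
  have hsub : M (Fin.last (n + 1)) (Fin.last n).castSucc = l n := by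
    simp [M, tridiagonal]
    omega
  rw [det_succ_row M (Fin.last (n + 1)), Fin.sum_univ_castSucc, Fin.sum_univ_castSucc,
    Finset.sum_eq_zero fun j _ => by rw [hrow, mul_zero, zero_mul], Fin.succAbove_last, hminor,
    tridiagonal_submatrix_castSucc, hdiag, hsub, Odd.neg_one_pow ⟨n, by simp; ring⟩,
    (Even.neg_one_pow ⟨n + 1, rfl⟩ : (-1 : R) ^ ((Fin.last (n + 1) : ℕ) + Fin.last (n + 1)) = 1)]
  ring

end Matrix

namespace Polynomial

theorem derivative_hermite_succ (n : ℕ) :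
    derivative (hermite (n + 1)) = (n + 1 : ℤ[X]) * hermite n := by
  induction n with
  | zero => simp
  | succ k ih =>
    rw [hermite_succ (k + 1), derivative_sub, derivative_mul, derivative_X, ih, derivative_mul,
      derivative_add, derivative_natCast, derivative_one, hermite_succ k]
    push_cast
    ring

theorem hermite_succ_succ (n : ℕ) :
    hermite (n + 2) = X * hermite (n + 1) - (n + 1 : ℤ[X]) * hermite n := by
  rw [hermite_succ (n + 1), derivative_hermite_succ]

theorem hermite_comp_neg_X (n : ℕ) : (hermite n).comp (-X) = (-1) ^ n * hermite n := by
  induction n using Nat.twoStepInduction with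
  | zero => simp
  | one => simp
  | more n ih₀ ih₁ =>
    rw [hermite_succ_succ, sub_comp, mul_comp, mul_comp, ih₀, ih₁]
    simp only [X_comp, add_comp, natCast_comp, one_comp]
    ring

end Polynomial

theorem charmatrix_hermMatrix (n : ℕ) :
    charmatrix (hermMatrix n) =
      tridiagonal (fun _ => X) (fun i => -((i : ℝ[X]) + 1)) (fun _ => -1) n := by
  ext i j
  rcases eq_or_ne i j with rfl | hij
  · simp [hermMatrix, tridiagonal]
  · have hji : (j : ℕ) ≠ i := fun h => hij (Fin.ext h).symm
    simp only [charmatrix_apply_ne _ _ _ hij, hermMatrix, tridiagonal, of_apply, if_neg hji]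
    split_ifs <;> simp

theorem charpoly_hermMatrix (n : ℕ) :
    (hermMatrix n).charpoly = (hermite n).map (Int.castRingHom ℝ) := by
  induction n using Nat.twoStepInduction with
  | zero => simp
  | one => simp [charpoly, charmatrix_hermMatrix, tridiagonal]
  | more n ih₀ ih₁ =>
    rw [charpoly, charmatrix_hermMatrix, det_tridiagonal_succ_succ, ← charmatrix_hermMatrix,
      ← charmatrix_hermMatrix, ← charpoly, ← charpoly, ih₀, ih₁, hermite_succ_succ]
    simp only [Polynomial.map_sub, Polynomial.map_mul, Polynomial.map_X, Polynomial.map_add,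
      Polynomial.map_natCast, Polynomial.map_one]
    ring

theorem stmt_0_general (n : ℕ) :
    (hermMatrix n).charpoly = (Polynomial.hermite n).map (Int.castRingHom ℝ) ∧
    ∀ l : ℝ,
      (hermMatrix n - l • (1 : Matrix (Fin n) (Fin n) ℝ)).det =
        Polynomial.aeval (-l) (Polynomial.hermite n) := by
  refine ⟨charpoly_hermMatrix n, fun l => ?_⟩
  have hparity := congrArg (aeval l) (hermite_comp_neg_X n)
  rw [aeval_comp, map_neg, aeval_X, map_mul, map_pow, map_neg, map_one] at hparity
  rw [← neg_sub, det_neg, hparity, aeval_def, eval₂_eq_eval_map, algebraMap_int_eq,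
    ← charpoly_hermMatrix, eval_charpoly, smul_one_eq_diagonal, Fintype.card_fin]
  rfl

/-- The characteristic polynomial of `A_n` equals the `n`-th probabilist's Hermite
polynomial; equivalently `det (A_n - λ I) = H_n (-λ)` for all real `λ`. -/
theorem stmt_0 (n : ℕ) (hn : 1 ≤ n) :
    (hermMatrix n).charpoly = (Polynomial.hermite n).map (Int.castRingHom ℝ) ∧
    ∀ l : ℝ,
      (hermMatrix n - l • (1 : Matrix (Fin n) (Fin n) ℝ)).det =
        Polynomial.aeval (-l) (Polynomial.hermite n) :=
  stmt_0_general n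
end

section
/- For every natural number n ≥ 1 and all real numbers a, b, every complex eigenvalue of the tridiagonal matrix M_n(a,b) (diagonal entries a, subdiagonal entries b, superdiagonal entries (i+1)·b) is real; equivalently, every complex root of the characteristic polynomial of M_n(a,b) has imaginary part zero. -/
/-!
With weights `w i = i!` the matrix `M = M_n(a,b)` satisfies the detailed-balance relation
`w i * M i j = w j * M j i`, because `i! * (i+1) = (i+1)!`. Hence conjugating `M` by
`diagonal (√w)` gives a real symmetric matrix with the same characteristic polynomial, and
the characteristic polynomial of a real symmetric matrix has only real roots.
-/

open Matrix Polynomial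

/-- The `n × n` tridiagonal matrix `M_n(a,b)` with diagonal entries `a`, subdiagonal
entries `b`, and superdiagonal entries `(M_n)_{i,i+1} = (i+1)·b`. -/
noncomputable def triMatrix (n : ℕ) (a b : ℝ) : Matrix (Fin n) (Fin n) ℝ :=
  Matrix.of fun i j =>
    if (i : ℕ) = (j : ℕ) then a
    else if (j : ℕ) = (i : ℕ) + 1 then ((i : ℕ) + 1 : ℝ) * b
    else if (i : ℕ) = (j : ℕ) + 1 then b
    else 0

namespace Matrix

variable {ι : Type*} [Fintype ι] [DecidableEq ι]

theorem IsHermitian.im_eq_zero_of_aeval_charpoly_eq_zero {S : Matrix ι ι ℝ} (hS : S.IsHermitian)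
    {z : ℂ} (hz : aeval z S.charpoly = 0) : z.im = 0 := by
  rw [hS.charpoly_eq, map_prod, Finset.prod_eq_zero_iff] at hz
  obtain ⟨i, -, hi⟩ := hz
  rw [map_sub, aeval_X, aeval_C, sub_eq_zero] at hi
  simp [hi]

theorem exists_isHermitian_charpoly_eq_of_weighted_symm {A : Matrix ι ι ℝ} {w : ι → ℝ}
    (hw : ∀ i, 0 < w i) (hA : ∀ i j, w i * A i j = w j * A j i) :
    ∃ S : Matrix ι ι ℝ, S.IsHermitian ∧ S.charpoly = A.charpoly := by
  set d : ι → ℝ := fun i => √(w i)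
  have hd : ∀ i, d i ≠ 0 := fun i => (Real.sqrt_pos.mpr (hw i)).ne'
  have hsq : ∀ i, d i ^ 2 = w i := fun i => Real.sq_sqrt (hw i).le
  refine ⟨diagonal d * A * diagonal d⁻¹, ?_, ?_⟩
  · ext i j
    simp only [conjTranspose_apply, star_trivial, mul_diagonal, diagonal_mul, Pi.inv_apply]
    field_simp [hd]
    linear_combination -hA i j + A j i * hsq j - A i j * hsq i
  · rw [charpoly_mul_comm, ← mul_assoc, diagonal_mul_diagonal]
    simp [hd]

end Matrix

theorem factorial_mul_triMatrix_symm (n : ℕ) (a b : ℝ) (i j : Fin n) :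
    (i.val.factorial : ℝ) * triMatrix n a b i j = (j.val.factorial : ℝ) * triMatrix n a b j i := by
  by_cases hij : i = j
  · rw [hij]
  have hij' : (i : ℕ) ≠ j := Fin.val_ne_of_ne hij
  simp only [triMatrix, of_apply, hij', hij'.symm, if_false]
  by_cases hj : (j : ℕ) = i + 1
  · have hi : (i : ℕ) ≠ j + 1 := by omega
    rw [if_pos hj, if_neg hi, if_pos hj, hj, Nat.factorial_succ]
    push_cast
    ring
  by_cases hi : (i : ℕ) = j + 1
  · rw [if_neg hj, if_pos hi, if_pos hi, hi, Nat.factorial_succ]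
    push_cast
    ring
  · simp [hi, hj]

theorem stmt_5_general (n : ℕ) (a b : ℝ) (z : ℂ)
    (hz : Polynomial.aeval z (triMatrix n a b).charpoly = 0) :
    z.im = 0 := by
  obtain ⟨S, hS, hSA⟩ := exists_isHermitian_charpoly_eq_of_weighted_symm
    (fun i => by positivity) (factorial_mul_triMatrix_symm n a b)
  exact hS.im_eq_zero_of_aeval_charpoly_eq_zero (hSA ▸ hz)

/-- Every complex eigenvalue of `M_n(a,b)`, i.e. every complex root of its
characteristic polynomial, is real. -/
theorem stmt_5 (n : ℕ) (hn : 1 ≤ n) (a b : ℝ) (z : ℂ)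
    (hz : Polynomial.aeval z (triMatrix n a b).charpoly = 0) :
    z.im = 0 :=
  stmt_5_general n a b z hz
end

section
/- For every natural number n ≥ 1 and all real numbers a, b with b ≠ 0, a real number λ is an eigenvalue of the tridiagonal matrix M_n(a,b) if and only if λ = a + b·ξ for some real root ξ of the n-th probabilist's Hermite polynomial H_n. -/
/-!
Write `λ = a + b ξ`. In the coordinates `p k = k! v k`, extended by `p n = 0`, the eigenvalue
equation of `M_n(a,b)` becomes `p (k+1) = ξ p k - k p (k-1)` for `k < n`: the three-term
recurrence `H (k+1) = x H k - k H (k-1)` of the Hermite polynomials. So an eigenvector has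
`p k = p 0 · H_k(ξ)` with `p 0 ≠ 0`, and `p n = 0` forces `H_n(ξ) = 0`; conversely, for a root
`ξ` of `H_n` the vector `v k = H_k(ξ) / k!` is an eigenvector.
-/

open Matrix Polynomial
open scoped Nat

namespace Polynomial

theorem derivative_hermite (n : ℕ) :
    derivative (hermite n) = (n : ℤ[X]) * hermite (n - 1) := by
  induction n with
  | zero => simp
  | succ n ih =>
    have hsucc : (n : ℤ[X]) * (X * hermite (n - 1) - derivative (hermite (n - 1)))
        = (n : ℤ[X]) * hermite n := by
      cases n with
      | zero => simp
      | succ m => rw [hermite_succ m]; rfl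
    rw [hermite_succ, derivative_sub, derivative_mul, derivative_X, ih, derivative_mul,
      derivative_natCast, Nat.add_sub_cancel]
    push_cast
    linear_combination hsucc

-- At `n = 0` the truncated `n - 1` is harmless: its coefficient is `0`.
theorem hermite_succ_eq_X_mul_sub (n : ℕ) :
    hermite (n + 1) = X * hermite n - (n : ℤ[X]) * hermite (n - 1) := by
  rw [hermite_succ, derivative_hermite]

end Polynomial

theorem eq_mul_aeval_hermite_of_recurrence {R : Type*} [CommRing R] {p : ℕ → R} {x : R}
    {n : ℕ} (hp : ∀ k < n, p (k + 1) = x * p k - k * p (k - 1)) :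
    ∀ k ≤ n, p k = p 0 * aeval x (hermite k) := by
  intro k
  induction k using Nat.strong_induction_on with
  | _ k ih =>
    intro hk
    cases k with
    | zero => simp
    | succ k =>
      rw [hp k (by omega), ih k (by omega) (by omega), ih (k - 1) (by omega) (by omega),
        hermite_succ_eq_X_mul_sub]
      simp only [map_sub, map_mul, aeval_X, map_natCast]
      ring

theorem Fin.sum_ite_val_eq {M : Type*} [AddCommMonoid M] {n : ℕ} (m : ℕ) (f : ℕ → M)
    (hf : n ≤ m → f m = 0) : ∑ j : Fin n, (if (j : ℕ) = m then f j else 0) = f m := by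
  rw [Fin.sum_univ_eq_sum_range (fun k => if k = m then f k else 0), Finset.sum_ite_eq']
  split_ifs with h
  · rfl
  · exact (hf (by simpa using h)).symm

noncomputable def factorialCoords {n : ℕ} (v : Fin n → ℝ) (k : ℕ) : ℝ :=
  if h : k < n then k ! * v ⟨k, h⟩ else 0

theorem factorialCoords_of_le {n : ℕ} (v : Fin n → ℝ) {k : ℕ} (hk : n ≤ k) :
    factorialCoords v k = 0 :=
  dif_neg hk.not_gt

theorem factorialCoords_val {n : ℕ} (v : Fin n → ℝ) (i : Fin n) :
    factorialCoords v i = (i ! : ℝ) * v i :=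
  dif_pos i.isLt

theorem factorial_mul_triMatrix_mulVec_apply {n : ℕ} (a b : ℝ) (v : Fin n → ℝ) (i : Fin n) :
    (i ! : ℝ) * (triMatrix n a b *ᵥ v) i = a * factorialCoords v i +
      b * (i * factorialCoords v (i - 1) + factorialCoords v (i + 1)) := by
  set p := factorialCoords v
  have hv (j : Fin n) : v j = p j / (j ! : ℝ) := by
    simp [p, factorialCoords, j.isLt, (Nat.factorial_pos j).ne']
  have hsum (m : ℕ) (c : ℝ) :
      ∑ j : Fin n, (if (j : ℕ) = m then c * (p j / j !) else 0) = c * (p m / m !) :=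
    Fin.sum_ite_val_eq m (fun k => c * (p k / k !)) fun hm => by
      simp only [p, factorialCoords_of_le v hm, zero_div, mul_zero]
  have hentry (j : Fin n) : triMatrix n a b i j * v j =
      (if (j : ℕ) = i then a * (p j / j !) else 0) +
      (if (j : ℕ) = i + 1 then ((i : ℝ) + 1) * b * (p j / j !) else 0) +
      (if (j : ℕ) = i - 1 then (if 1 ≤ (i : ℕ) then b else 0) * (p j / j !) else 0) := by
    -- the guard is needed because at `i = 0` the truncated `i - 1` is `0`
    rw [hv]
    simp only [triMatrix, of_apply]
    split_ifs <;> first | ring1 | omega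
  simp only [mulVec, dotProduct, hentry, Finset.sum_add_distrib, hsum]
  obtain ⟨i, hi⟩ := i
  cases i with
  | zero => simp
  | succ m =>
    simp only [Nat.add_sub_cancel, le_add_iff_nonneg_left, Nat.zero_le, ↓reduceIte,
      Nat.factorial_succ]
    push_cast
    field_simp
    ring

theorem eq_zero_of_forall_factorialCoords_eq_zero {n : ℕ} {v : Fin n → ℝ}
    (h : ∀ k < n, factorialCoords v k = 0) : v = 0 := by
  ext i
  have := h i i.isLt
  rw [factorialCoords_val] at this
  simpa [(Nat.factorial_pos i).ne'] using this

theorem triMatrix_mulVec_eq_smul_iff {n : ℕ} {a b : ℝ} (hb : b ≠ 0) (ξ : ℝ) (v : Fin n → ℝ) :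
    triMatrix n a b *ᵥ v = (a + b * ξ) • v ↔ ∀ k < n,
      factorialCoords v (k + 1) = ξ * factorialCoords v k - k * factorialCoords v (k - 1) := by
  set p := factorialCoords v
  have hrow (i : Fin n) : (triMatrix n a b *ᵥ v) i = ((a + b * ξ) • v) i ↔
      p (i + 1) = ξ * p i - i * p (i - 1) := by
    rw [← mul_right_inj' (by positivity : (i ! : ℝ) ≠ 0), factorial_mul_triMatrix_mulVec_apply,
      Pi.smul_apply, smul_eq_mul, mul_left_comm, ← factorialCoords_val]
    constructor
    · intro h
      apply mul_left_cancel₀ hb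
      linear_combination h
    · intro h
      linear_combination b * h
  simp only [funext_iff, hrow, Fin.forall_iff]

theorem aeval_hermite_eq_zero_of_triMatrix_mulVec {n : ℕ} {a b ξ : ℝ} (hb : b ≠ 0)
    {v : Fin n → ℝ} (hv : v ≠ 0) (h : triMatrix n a b *ᵥ v = (a + b * ξ) • v) :
    aeval ξ (hermite n) = 0 := by
  have hp := eq_mul_aeval_hermite_of_recurrence ((triMatrix_mulVec_eq_smul_iff hb ξ v).1 h)
  have h0 : factorialCoords v 0 ≠ 0 := fun h0 =>
    hv <| eq_zero_of_forall_factorialCoords_eq_zero fun k hk => by rw [hp k hk.le, h0, zero_mul]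
  have hn := hp n le_rfl
  rw [factorialCoords_of_le v le_rfl] at hn
  exact (mul_eq_zero.1 hn.symm).resolve_left h0

noncomputable def hermiteVector (n : ℕ) (ξ : ℝ) : Fin n → ℝ :=
  fun i => aeval ξ (hermite i) / (i ! : ℝ)

theorem factorialCoords_hermiteVector {n : ℕ} {ξ : ℝ} (hξ : aeval ξ (hermite n) = 0) {k : ℕ}
    (hk : k ≤ n) : factorialCoords (hermiteVector n ξ) k = aeval ξ (hermite k) := by
  rcases hk.lt_or_eq with hk | rfl
  · simp only [factorialCoords, hermiteVector, dif_pos hk]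
    field_simp
  · rw [factorialCoords_of_le _ le_rfl, hξ]

theorem hermiteVector_ne_zero {n : ℕ} {ξ : ℝ} (hξ : aeval ξ (hermite n) = 0) :
    hermiteVector n ξ ≠ 0 := fun h => by
  have h0 := factorialCoords_hermiteVector hξ (Nat.zero_le n)
  simp [h, factorialCoords] at h0

theorem triMatrix_mulVec_hermiteVector {n : ℕ} {a b ξ : ℝ} (hb : b ≠ 0)
    (hξ : aeval ξ (hermite n) = 0) :
    triMatrix n a b *ᵥ hermiteVector n ξ = (a + b * ξ) • hermiteVector n ξ := by
  refine (triMatrix_mulVec_eq_smul_iff hb ξ _).2 fun k hk => ?_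
  rw [factorialCoords_hermiteVector hξ hk, factorialCoords_hermiteVector hξ hk.le,
    factorialCoords_hermiteVector hξ (by omega), hermite_succ_eq_X_mul_sub]
  simp only [map_sub, map_mul, aeval_X, map_natCast]

theorem stmt_6_general (n : ℕ) (a b : ℝ) (hb : b ≠ 0) (l : ℝ) :
    (∃ v : Fin n → ℝ, v ≠ 0 ∧ (triMatrix n a b).mulVec v = l • v) ↔
      ∃ ξ : ℝ, Polynomial.aeval ξ (Polynomial.hermite n) = 0 ∧ l = a + b * ξ := by
  constructor
  · rintro ⟨v, hv, hMv⟩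
    have hl : l = a + b * ((l - a) / b) := by field_simp; ring
    exact ⟨_, aeval_hermite_eq_zero_of_triMatrix_mulVec hb hv (hl ▸ hMv), hl⟩
  · rintro ⟨ξ, hξ, rfl⟩
    exact ⟨hermiteVector n ξ, hermiteVector_ne_zero hξ, triMatrix_mulVec_hermiteVector hb hξ⟩

/-- For `b ≠ 0`, a real `λ` is an eigenvalue of `M_n(a,b)` iff `λ = a + b ξ` for some
real root `ξ` of the `n`-th probabilist's Hermite polynomial. -/
theorem stmt_6 (n : ℕ) (hn : 1 ≤ n) (a b : ℝ) (hb : b ≠ 0) (l : ℝ) :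
    (∃ v : Fin n → ℝ, v ≠ 0 ∧ (triMatrix n a b).mulVec v = l • v) ↔
      ∃ ξ : ℝ, Polynomial.aeval ξ (Polynomial.hermite n) = 0 ∧ l = a + b * ξ :=
  stmt_6_general n a b hb l
end

section
/- Let μ be a Borel probability measure on ℝ whose cumulative distribution function F(λ) = μ((−∞, λ]) is continuous. Then for all natural numbers j, l and k < 2^j, m < 2^l, the composed Haar wavelets are orthonormal with respect to μ: ∫ ψ_{jk}(F(λ))·ψ_{lm}(F(λ)) dμ(λ) equals 1 if (j,k) = (l,m) and 0 otherwise. -/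
open MeasureTheory

/-- The Haar mother wavelet: `1` on `[0, 1/2)`, `-1` on `[1/2, 1)`, `0` elsewhere. -/
noncomputable def motherHaar (u : ℝ) : ℝ :=
  if 0 ≤ u ∧ u < 1 / 2 then 1
  else if 1 / 2 ≤ u ∧ u < 1 then -1
  else 0

/-- The Haar wavelet `ψ_{jk}(u) = 2^{j/2} ψ(2^j u - k)`. -/
noncomputable def haarW (j k : ℕ) (u : ℝ) : ℝ :=
  (2 : ℝ) ^ ((j : ℝ) / 2) * motherHaar ((2 : ℝ) ^ j * u - (k : ℝ))

/-!
A continuous CDF `F` pushes `μ` forward to the uniform distribution on `[0, 1]`: for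
`0 ≤ u < 1` the set `{F ≤ u}` is a closed half-line `(-∞, s]` with `F s = u`, so it has
`μ`-mass `u`. The integral therefore becomes the Lebesgue integral of `ψ_{jk} ψ_{lm}`, which
vanishes outside `[0, 1]`. There orthonormality is the classical computation: `‖ψ_{jk}‖₂ = 1`
by scaling, wavelets of the same level have disjoint supports `[k/2^j, (k+1)/2^j)`, and for
`j < l` the wavelet `ψ_{jk}` is constant on the support of `ψ_{lm}`, whose mean is `0`.
-/

open Set ProbabilityTheory

lemma integral_comp_mul_sub {E : Type*} [NormedAddCommGroup E] [NormedSpace ℝ E]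
    (g : ℝ → E) (a b : ℝ) : ∫ x, g (a * x - b) = |a⁻¹| • ∫ y, g y := by
  rw [Measure.integral_comp_mul_left (fun y => g (y - b)), integral_sub_right_eq_self]

lemma floor_two_pow_mul_eq_of_le {i l : ℕ} (hil : i ≤ l) {u v : ℝ}
    (h : ⌊2 ^ l * u⌋ = ⌊2 ^ l * v⌋) : ⌊2 ^ i * u⌋ = ⌊2 ^ i * v⌋ := by
  have hdiv : ∀ x : ℝ, ⌊2 ^ i * x⌋ = ⌊2 ^ l * x⌋ / (2 ^ (l - i) : ℕ) := by
    intro x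
    rw [← Int.floor_div_natCast]
    push_cast
    rw [pow_sub₀ _ two_ne_zero hil]
    field_simp
  rw [hdiv, hdiv, h]

lemma exists_preimage_Iic_eq_Iic {f : ℝ → ℝ} (hf : Continuous f) (hmono : Monotone f)
    {u : ℝ} (hne : (f ⁻¹' Iic u).Nonempty) (hbdd : BddAbove (f ⁻¹' Iic u)) :
    ∃ s, f ⁻¹' Iic u = Iic s ∧ f s = u := by
  set s := sSup (f ⁻¹' Iic u)
  have hs : f s ≤ u := (isClosed_Iic.preimage hf).csSup_mem hne hbdd
  have hIic : f ⁻¹' Iic u = Iic s :=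
    Subset.antisymm (fun x hx => le_csSup hbdd hx) (fun x hx => (hmono hx).trans hs)
  have hright : ∀ t ∈ Ioi s, u ≤ f t := fun t ht =>
    le_of_not_ge fun hft => (mem_Ioi.1 ht).not_ge (hIic.subset (mem_preimage.2 hft))
  exact ⟨s, hIic, le_antisymm hs (ge_of_tendsto (hf.continuousWithinAt.tendsto)
    (eventually_nhdsWithin_of_forall hright))⟩

lemma motherHaar_eq_indicator :
    motherHaar = (Ico 0 (1 / 2)).indicator 1 - (Ico (1 / 2) 1).indicator 1 := by
  ext x
  simp only [motherHaar, Pi.sub_apply, indicator, mem_Ico, Pi.one_apply]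
  split_ifs <;> grind

lemma motherHaar_mul_self (x : ℝ) : motherHaar x * motherHaar x = (Ico 0 1).indicator 1 x := by
  simp only [motherHaar, indicator, mem_Ico, Pi.one_apply]
  split_ifs <;> grind

lemma motherHaar_eq_ite_floor (x : ℝ) :
    motherHaar x = if ⌊2 * x⌋ = 0 then 1 else if ⌊2 * x⌋ = 1 then -1 else 0 := by
  simp only [motherHaar, Int.floor_eq_iff]
  push_cast
  split_ifs <;> grind

lemma motherHaar_congr_floor {x y : ℝ} (h : ⌊2 * x⌋ = ⌊2 * y⌋) :
    motherHaar x = motherHaar y := by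
  simp only [motherHaar_eq_ite_floor, h]

lemma motherHaar_eq_zero_of_floor_ne_zero {x : ℝ} (hx : ⌊x⌋ ≠ 0) : motherHaar x = 0 := by
  rw [Ne, Int.floor_eq_iff] at hx
  push_cast at hx
  simp only [motherHaar]
  split_ifs <;> grind

lemma measurable_motherHaar : Measurable motherHaar := by
  rw [motherHaar_eq_indicator]
  exact (measurable_const.indicator measurableSet_Ico).sub
    (measurable_const.indicator measurableSet_Ico)

lemma integral_motherHaar : ∫ x, motherHaar x = 0 := by
  have hind : ∀ a b : ℝ, Integrable ((Ico a b).indicator (1 : ℝ → ℝ)) :=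
    fun a b => (integrableOn_const measure_Ico_lt_top.ne).integrable_indicator measurableSet_Ico
  simp only [motherHaar_eq_indicator, Pi.sub_apply]
  rw [integral_sub (hind _ _) (hind _ _),
    integral_indicator_one measurableSet_Ico, integral_indicator_one measurableSet_Ico,
    Real.volume_real_Ico, Real.volume_real_Ico]
  norm_num

lemma integral_motherHaar_mul_self : ∫ x, motherHaar x * motherHaar x = 1 := by
  simp_rw [motherHaar_mul_self]
  rw [integral_indicator_one measurableSet_Ico, Real.volume_real_Ico]
  norm_num

lemma measurable_haarW (j k : ℕ) : Measurable (haarW j k) :=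
  measurable_const.mul (measurable_motherHaar.comp (by fun_prop))

lemma integral_haarW (j k : ℕ) : ∫ u, haarW j k u = 0 := by
  simp only [haarW]
  rw [integral_const_mul, integral_comp_mul_sub motherHaar, integral_motherHaar, smul_zero,
    mul_zero]

lemma integral_haarW_mul_self (j k : ℕ) : ∫ u, haarW j k u * haarW j k u = 1 := by
  have hsq : (2 : ℝ) ^ ((j : ℝ) / 2) * 2 ^ ((j : ℝ) / 2) = 2 ^ j := by
    rw [← Real.rpow_add two_pos, add_halves, Real.rpow_natCast]
  have hmul : ∀ u, haarW j k u * haarW j k u =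
      2 ^ j * (motherHaar (2 ^ j * u - k) * motherHaar (2 ^ j * u - k)) := by
    intro u
    rw [haarW, mul_mul_mul_comm, hsq]
  simp_rw [hmul]
  rw [integral_const_mul, integral_comp_mul_sub (fun x => motherHaar x * motherHaar x),
    integral_motherHaar_mul_self, smul_eq_mul, mul_one, abs_of_pos (by positivity),
    mul_inv_cancel₀ (by positivity)]

lemma floor_two_pow_mul_eq_of_haarW_ne_zero {j k : ℕ} {u : ℝ} (h : haarW j k u ≠ 0) :
    ⌊2 ^ j * u⌋ = k := by
  by_contra hne
  refine h (mul_eq_zero_of_right _ (motherHaar_eq_zero_of_floor_ne_zero ?_))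
  rw [Int.floor_sub_natCast]
  omega

lemma haarW_eq_of_floor_eq {j : ℕ} (k : ℕ) {u v : ℝ}
    (h : ⌊2 ^ (j + 1) * u⌋ = ⌊2 ^ (j + 1) * v⌋) : haarW j k u = haarW j k v := by
  have hfloor : ∀ x : ℝ, ⌊2 * (2 ^ j * x - k)⌋ = ⌊2 ^ (j + 1) * x⌋ - (2 * k : ℕ) := by
    intro x
    rw [← Int.floor_sub_natCast]
    push_cast
    ring_nf
  simp only [haarW]
  congr 1
  apply motherHaar_congr_floor
  rw [hfloor, hfloor, h]

lemma haarW_mul_eq_const_mul {j l : ℕ} (hjl : j < l) (k m : ℕ) (u : ℝ) :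
    haarW j k u * haarW l m u = haarW j k (m / 2 ^ l) * haarW l m u := by
  by_cases h : haarW l m u = 0
  · simp [h]
  refine congrArg (· * _) (haarW_eq_of_floor_eq k (floor_two_pow_mul_eq_of_le hjl ?_))
  rw [floor_two_pow_mul_eq_of_haarW_ne_zero h, mul_div_cancel₀ _ (by positivity),
    Int.floor_natCast]

lemma integral_haarW_mul_of_lt {j l : ℕ} (hjl : j < l) (k m : ℕ) :
    ∫ u, haarW j k u * haarW l m u = 0 := by
  simp_rw [haarW_mul_eq_const_mul hjl]
  rw [integral_const_mul, integral_haarW, mul_zero]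

lemma haarW_mul_haarW_of_ne {k m : ℕ} (hkm : k ≠ m) (j : ℕ) (u : ℝ) :
    haarW j k u * haarW j m u = 0 := by
  by_contra h
  obtain ⟨hk, hm⟩ := mul_ne_zero_iff.1 h
  have := (floor_two_pow_mul_eq_of_haarW_ne_zero hk).symm.trans
    (floor_two_pow_mul_eq_of_haarW_ne_zero hm)
  exact hkm (by exact_mod_cast this)

lemma integral_haarW_mul_haarW (j k l m : ℕ) :
    ∫ u, haarW j k u * haarW l m u = if (j, k) = (l, m) then 1 else 0 := by
  rcases lt_trichotomy j l with hjl | rfl | hlj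
  · rw [if_neg (by simp [hjl.ne]), integral_haarW_mul_of_lt hjl]
  · rcases eq_or_ne k m with rfl | hkm
    · rw [if_pos rfl, integral_haarW_mul_self]
    · simp_rw [haarW_mul_haarW_of_ne hkm]
      simp [hkm]
  · simp_rw [mul_comm (haarW j k _)]
    rw [if_neg (by simp [hlj.ne']), integral_haarW_mul_of_lt hlj]

lemma haarW_eq_zero_of_notMem_Icc {j k : ℕ} (hk : k < 2 ^ j) {u : ℝ} (hu : u ∉ Icc 0 1) :
    haarW j k u = 0 := by
  by_contra h
  have hfloor := Int.floor_eq_iff.1 (floor_two_pow_mul_eq_of_haarW_ne_zero h)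
  rw [Int.cast_natCast] at hfloor
  have hpow : (0 : ℝ) < 2 ^ j := by positivity
  have hk' : (k : ℝ) + 1 ≤ 2 ^ j := by exact_mod_cast hk
  exact hu ⟨by nlinarith, by nlinarith⟩

lemma measure_cdf_preimage_Iic (μ : Measure ℝ) [IsProbabilityMeasure μ]
    (hc : Continuous (cdf μ)) (u : ℝ) :
    μ (cdf μ ⁻¹' Iic u) = ENNReal.ofReal (min u 1) := by
  rcases le_or_gt 1 u with h1 | h1
  · have huniv : cdf μ ⁻¹' Iic u = univ :=
      eq_univ_of_forall fun t => (cdf_le_one μ t).trans h1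
    rw [huniv, measure_univ, min_eq_right h1, ENNReal.ofReal_one]
  rw [min_eq_left h1.le]
  rcases (cdf μ ⁻¹' Iic u).eq_empty_or_nonempty with hempty | hne
  · have hu : u ≤ 0 := by
      by_contra! hu
      obtain ⟨t, ht⟩ := ((tendsto_cdf_atBot μ).eventually (gt_mem_nhds hu)).exists
      exact hempty.subset (show t ∈ cdf μ ⁻¹' Iic u from ht.le)
    rw [hempty, measure_empty, ENNReal.ofReal_of_nonpos hu]
  obtain ⟨t₀, ht₀⟩ := ((tendsto_cdf_atTop μ).eventually (lt_mem_nhds h1)).exists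
  have hbdd : BddAbove (cdf μ ⁻¹' Iic u) :=
    ⟨t₀, fun x hx => ((monotone_cdf μ).reflect_lt (lt_of_le_of_lt hx ht₀)).le⟩
  obtain ⟨s, hs, hcdf⟩ := exists_preimage_Iic_eq_Iic hc (monotone_cdf μ) hne hbdd
  rw [hs, ← ofReal_cdf, hcdf]

lemma map_cdf_eq_volume_restrict_Icc (μ : Measure ℝ) [IsProbabilityMeasure μ]
    (hc : Continuous (cdf μ)) : μ.map (cdf μ) = volume.restrict (Icc 0 1) := by
  have : IsProbabilityMeasure (μ.map (cdf μ)) := Measure.isProbabilityMeasure_map hc.aemeasurable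
  refine Measure.ext_of_Iic _ _ fun u => ?_
  have hinter : Iic u ∩ Icc 0 1 = Icc 0 (min u 1) := by
    ext x
    simp only [mem_inter_iff, mem_Iic, mem_Icc, le_min_iff]
    tauto
  rw [Measure.map_apply hc.measurable measurableSet_Iic, measure_cdf_preimage_Iic μ hc,
    Measure.restrict_apply measurableSet_Iic, hinter, Real.volume_Icc, sub_zero]

theorem stmt_11_general (μ : Measure ℝ) [IsProbabilityMeasure μ]
    (F : ℝ → ℝ) (hF : ∀ t : ℝ, F t = (μ (Set.Iic t)).toReal) (hFc : Continuous F)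
    (j l k m : ℕ) (hk : k < 2 ^ j) :
    ∫ t, haarW j k (F t) * haarW l m (F t) ∂μ =
      if (j, k) = (l, m) then 1 else 0 := by
  obtain rfl : F = cdf μ := funext fun t => by rw [hF, cdf_eq_real, measureReal_def]
  have hmeas : Measurable fun u => haarW j k u * haarW l m u :=
    (measurable_haarW j k).mul (measurable_haarW l m)
  calc ∫ t, haarW j k (cdf μ t) * haarW l m (cdf μ t) ∂μ
      = ∫ u, haarW j k u * haarW l m u ∂(μ.map (cdf μ)) :=
        (integral_map hFc.aemeasurable hmeas.aestronglyMeasurable).symm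
    _ = ∫ u in Icc 0 1, haarW j k u * haarW l m u := by
        rw [map_cdf_eq_volume_restrict_Icc μ hFc]
    _ = ∫ u, haarW j k u * haarW l m u :=
        setIntegral_eq_integral_of_forall_compl_eq_zero fun u hu => by
          rw [haarW_eq_zero_of_notMem_Icc hk hu, zero_mul]
    _ = if (j, k) = (l, m) then 1 else 0 := integral_haarW_mul_haarW j k l m

/-- If `μ` is a Borel probability measure on `ℝ` with continuous CDF
`F(λ) = μ((-∞, λ])`, then the composed Haar wavelets `ψ_{jk} ∘ F` are orthonormal
with respect to `μ`. -/
theorem stmt_11 (μ : Measure ℝ) [IsProbabilityMeasure μ]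
    (F : ℝ → ℝ) (hF : ∀ t : ℝ, F t = (μ (Set.Iic t)).toReal) (hFc : Continuous F)
    (j l k m : ℕ) (hk : k < 2 ^ j) (hm : m < 2 ^ l) :
    ∫ t, haarW j k (F t) * haarW l m (F t) ∂μ =
      if (j, k) = (l, m) then 1 else 0 :=
  stmt_11_general μ F hF hFc j l k m hk
end
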